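/- arXiv:2102.10469 — 2 statements merged into one kernel-verified Lean document; each statement's English description precedes it below -/
import Mathlib

section
/- The l₁-contextuality distance is subadditive under box composition: for behaviors B₁ ∈ 𝔹₁ and B₂ ∈ 𝔹₂, d(B₁ ⊞ B₂) = max{d(B₁), d(B₂)} ≤ d(B₁) + d(B₂), where d(B) := min over noncontextual behaviors B* of max over (i,j) of Σ_k |p(k|i,j) − p*(k|i,j)|, and the noncontextual set of the composed scenario is the product NC(𝔹₁) × NC(𝔹₂) of the noncontextual sets (each a nonempty compact set). -/
open Finset

/-- The max-over-settings of the l₁-distance over outcomes between two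
behaviors. -/
noncomputable def behaviorDist {K I J : Type*} [Fintype K] [Fintype I] [Fintype J]
    (B C : K → I → J → ℝ) : ℝ :=
  ⨆ x : I × J, ∑ k, |B k x.1 x.2 - C k x.1 x.2|

/-- The l₁-contextuality distance of a behavior to a set `NC` of
noncontextual behaviors. -/
noncomputable def ctxDist {K I J : Type*} [Fintype K] [Fintype I] [Fintype J]
    (NC : Set (K → I → J → ℝ)) (B : K → I → J → ℝ) : ℝ :=
  sInf ((fun C => behaviorDist B C) '' NC)

lemma behaviorDist_nonneg {K I J : Type*} [Fintype K] [Fintype I] [Fintype J]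
    (B C : K → I → J → ℝ) : 0 ≤ behaviorDist B C :=
  Real.iSup_nonneg fun _ => Finset.sum_nonneg fun _ _ => abs_nonneg _

lemma ctxDist_le {K I J : Type*} [Fintype K] [Fintype I] [Fintype J]
    (NC : Set (K → I → J → ℝ)) (B : K → I → J → ℝ) {C : K → I → J → ℝ}
    (hC : C ∈ NC) : ctxDist NC B ≤ behaviorDist B C :=
  csInf_le ⟨0, fun _ ⟨D, _, hD⟩ => hD ▸ behaviorDist_nonneg B D⟩ ⟨C, hC, rfl⟩

/-- The l₁-contextuality distance is subadditive under box composition: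
`d(B₁ ⊞ B₂) = max (d B₁) (d B₂) ≤ d B₁ + d B₂`, where the noncontextual set
of the composed scenario is `NC₁ × NC₂` and the composed distance takes the
max over the index pairs of both components. -/
theorem ctxDist_box_composition
    {K₁ I₁ J₁ K₂ I₂ J₂ : Type*}
    [Fintype K₁] [Fintype I₁] [Fintype J₁] [Fintype K₂] [Fintype I₂] [Fintype J₂]
    (NC₁ : Set (K₁ → I₁ → J₁ → ℝ)) (NC₂ : Set (K₂ → I₂ → J₂ → ℝ))
    (hNC₁ : NC₁.Nonempty) (hNC₂ : NC₂.Nonempty)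
    (hNC₁c : IsCompact NC₁) (hNC₂c : IsCompact NC₂)
    (B₁ : K₁ → I₁ → J₁ → ℝ) (B₂ : K₂ → I₂ → J₂ → ℝ) :
    sInf ((fun C : (K₁ → I₁ → J₁ → ℝ) × (K₂ → I₂ → J₂ → ℝ) =>
        max (behaviorDist B₁ C.1) (behaviorDist B₂ C.2)) '' (NC₁ ×ˢ NC₂))
      = max (ctxDist NC₁ B₁) (ctxDist NC₂ B₂) ∧
    sInf ((fun C : (K₁ → I₁ → J₁ → ℝ) × (K₂ → I₂ → J₂ → ℝ) =>
        max (behaviorDist B₁ C.1) (behaviorDist B₂ C.2)) '' (NC₁ ×ˢ NC₂))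
      ≤ ctxDist NC₁ B₁ + ctxDist NC₂ B₂ := by
  set S := (fun C : (K₁ → I₁ → J₁ → ℝ) × (K₂ → I₂ → J₂ → ℝ) =>
      max (behaviorDist B₁ C.1) (behaviorDist B₂ C.2)) '' (NC₁ ×ˢ NC₂) with hS
  obtain ⟨C₁, hC₁⟩ := hNC₁
  obtain ⟨C₂, hC₂⟩ := hNC₂
  have hSne : S.Nonempty := ⟨_, ⟨(C₁, C₂), ⟨hC₁, hC₂⟩, rfl⟩⟩
  have hd₁ : 0 ≤ ctxDist NC₁ B₁ :=
    le_csInf ⟨_, C₁, hC₁, rfl⟩ (by rintro _ ⟨D, _, rfl⟩; exact behaviorDist_nonneg B₁ D)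
  have hd₂ : 0 ≤ ctxDist NC₂ B₂ :=
    le_csInf ⟨_, C₂, hC₂, rfl⟩ (by rintro _ ⟨D, _, rfl⟩; exact behaviorDist_nonneg B₂ D)
  have heq : sInf S = max (ctxDist NC₁ B₁) (ctxDist NC₂ B₂) := by
    apply le_antisymm
    · apply le_of_forall_pos_le_add
      intro ε hε
      obtain ⟨a, ⟨D₁, hD₁, rfl⟩, ha⟩ :=
        Real.lt_sInf_add_pos (⟨_, C₁, hC₁, rfl⟩ : ((fun C => behaviorDist B₁ C) '' NC₁).Nonempty) hε
      obtain ⟨b, ⟨D₂, hD₂, rfl⟩, hb⟩ :=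
        Real.lt_sInf_add_pos (⟨_, C₂, hC₂, rfl⟩ : ((fun C => behaviorDist B₂ C) '' NC₂).Nonempty) hε
      have hmem : max (behaviorDist B₁ D₁) (behaviorDist B₂ D₂) ∈ S :=
        ⟨(D₁, D₂), ⟨hD₁, hD₂⟩, rfl⟩
      refine (csInf_le ⟨0, ?_⟩ hmem).trans ?_
      · rintro _ ⟨D, _, rfl⟩
        exact le_max_of_le_left (behaviorDist_nonneg B₁ D.1)
      · exact max_le (ha.le.trans (by simp [ctxDist, le_max_left, add_le_add_right]))
          (hb.le.trans (by simp [ctxDist, le_max_right, add_le_add_right]))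
    · apply le_csInf hSne
      rintro _ ⟨D, ⟨hD₁, hD₂⟩, rfl⟩
      exact max_le_max (ctxDist_le NC₁ B₁ hD₁) (ctxDist_le NC₂ B₂ hD₂)
  refine ⟨heq, heq.le.trans (max_le (le_add_of_nonneg_right hd₂) (le_add_of_nonneg_left hd₁))⟩
end

section
/- Any behavior satisfying the operational equivalence constraint of the simplest scenario and admitting an ontological model respecting it obeys the noncontextuality inequality p_{12} + p_{24} − p_{22} − p_{13} ≤ 1: suppose there is a finite set Λ, probability distributions μ₁, μ₂, μ₃, μ₄ on Λ with (1/2)μ₁ + (1/2)μ₂ = (1/2)μ₃ + (1/2)μ₄, and functions ξ₁, ξ₂ : Λ → [0,1], such that p_{ij} = Σ_λ ξ_i(λ) μ_j(λ). Then p_{12} + p_{24} − p_{22} − p_{13} ≤ 1. -/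
open Finset

/-- Any behavior of the simplest scenario admitting a noncontextual
ontological model (probability distributions `μ₁,…,μ₄` on a finite ontic space
satisfying `(1/2)μ₁ + (1/2)μ₂ = (1/2)μ₃ + (1/2)μ₄`, and response functions
`ξ₁, ξ₂` valued in `[0,1]`) obeys the noncontextuality inequality
`p₁₂ + p₂₄ − p₂₂ − p₁₃ ≤ 1`. Here `μ j` is indexed by `j : Fin 4` and
`ξ i` by `i : Fin 2`, and `p i j = ∑ λ, ξ i λ * μ j λ`. -/
theorem noncontextual_model_obeys_inequality
    {Λ : Type*} [Fintype Λ]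
    (μ : Fin 4 → Λ → ℝ)
    (hμ0 : ∀ j l, 0 ≤ μ j l) (hμ1 : ∀ j, ∑ l, μ j l = 1)
    (hequiv : ∀ l, (1/2 : ℝ) * μ 0 l + (1/2) * μ 1 l
                 = (1/2) * μ 2 l + (1/2) * μ 3 l)
    (ξ : Fin 2 → Λ → ℝ)
    (hξ : ∀ i l, ξ i l ∈ Set.Icc (0:ℝ) 1)
    (p : Fin 2 → Fin 4 → ℝ)
    (hp : ∀ i j, p i j = ∑ l, ξ i l * μ j l) :
    p 0 1 + p 1 3 - p 1 1 - p 0 2 ≤ 1 := by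
  have key : ∀ l, ξ 0 l * μ 1 l + ξ 1 l * μ 3 l - ξ 1 l * μ 1 l - ξ 0 l * μ 2 l
      ≤ μ 3 l := by
    intro l
    have h := hequiv l
    obtain ⟨hx0, hx1⟩ := hξ 0 l
    obtain ⟨hy0, hy1⟩ := hξ 1 l
    have ha := hμ0 0 l
    have hb := hμ0 1 l
    have hc := hμ0 2 l
    have hd := hμ0 3 l
    have hd' : (0:ℝ) ≤ μ 0 l + μ 1 l - μ 2 l := by linarith
    nlinarith [mul_nonneg (mul_nonneg (sub_nonneg.2 hx1) (sub_nonneg.2 hy1)) hd',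
      mul_nonneg (mul_nonneg hx0 (sub_nonneg.2 hy1)) ha,
      mul_nonneg (mul_nonneg hy0 (sub_nonneg.2 hx1)) hb,
      mul_nonneg (mul_nonneg hx0 hy0) hc]
  calc p 0 1 + p 1 3 - p 1 1 - p 0 2
      = ∑ l, (ξ 0 l * μ 1 l + ξ 1 l * μ 3 l - ξ 1 l * μ 1 l - ξ 0 l * μ 2 l) := by
        simp [hp, Finset.sum_add_distrib, Finset.sum_sub_distrib]
    _ ≤ ∑ l, μ 3 l := Finset.sum_le_sum fun l _ => key l
    _ = 1 := hμ1 3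
end
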